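/- Let ω be a radial weight with ω ∈ Ď and let φ : [0,1) → (0,∞) be decreasing. Then ωφ ∈ Ď. Furthermore, if there exist k > 1 and C > 0 such that C ∫_{1−(1−r)/k}^1 ω(s) ds ≤ ∫_r^{1−(1−r)/k} ω(s) ds for all 0 ≤ r < 1, then C ∫_{1−(1−r)/k}^1 ω(s) φ(s) ds ≤ ∫_r^{1−(1−r)/k} ω(s) φ(s) ds for all 0 ≤ r < 1. -/

import Mathlib

open MeasureTheory Set Filter
open scoped ENNReal

/-- The tail integral `ω̂(r) = ∫_r^1 ω(s) ds` of a radial weight. -/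
noncomputable def wHat (ω : ℝ → ℝ) (r : ℝ) : ℝ := ∫ s in r..1, ω s

/-- The moment `ω_x = ∫_0^1 s^x ω(s) ds` of a radial weight. -/
noncomputable def wMom (ω : ℝ → ℝ) (x : ℝ) : ℝ := ∫ s in (0:ℝ)..1, s ^ x * ω s

/-- A radial weight: nonnegative, integrable on `[0,1)`, with positive tail integrals. -/
def IsRadialWeight (ω : ℝ → ℝ) : Prop :=
  (∀ s ∈ Set.Ico (0:ℝ) 1, 0 ≤ ω s) ∧
    MeasureTheory.IntegrableOn ω (Set.Ico (0:ℝ) 1) ∧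
    ∀ r ∈ Set.Ico (0:ℝ) 1, 0 < wHat ω r

/-- The class `D̂` of radial weights. -/
def Dhat (ω : ℝ → ℝ) : Prop :=
  ∃ C > (1:ℝ), ∀ r ∈ Set.Ico (0:ℝ) 1, wHat ω r ≤ C * wHat ω ((1 + r) / 2)

/-- The class `Ď` of radial weights. -/
def Dcheck (ω : ℝ → ℝ) : Prop :=
  ∃ k > (1:ℝ), ∃ C > (1:ℝ), ∀ r ∈ Set.Ico (0:ℝ) 1,
    wHat ω r ≥ C * wHat ω (1 - (1 - r) / k)

/-- The class `D = D̂ ∩ Ď`. -/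
def Dclass (ω : ℝ → ℝ) : Prop := Dhat ω ∧ Dcheck ω

/-- The class `M`: `ω_x ≥ C ω_{kx}` for all `x ≥ 1`. -/
def Mclass (ω : ℝ → ℝ) : Prop :=
  ∃ C > (1:ℝ), ∃ k > (1:ℝ), ∀ x : ℝ, 1 ≤ x → wMom ω x ≥ C * wMom ω (k * x)

/-- The fractional derivative `D^μ f(z) = Σ (f̂(n)/μ_{2n+1}) zⁿ` induced by a radial
weight `μ`, acting on the Taylor coefficients `a` of `f`. -/
noncomputable def Dfrac (μ : ℝ → ℝ) (a : ℕ → ℂ) (z : ℂ) : ℂ :=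
  ∑' n : ℕ, (a n / ((wMom μ (2 * (n : ℝ) + 1) : ℝ) : ℂ)) * z ^ n

/-- `∫_𝔻 |f(z)|^p w(|z|) dA(z)` as a Lebesgue integral (up to the normalization `1/π`). -/
noncomputable def discLInt (p : ℝ) (w : ℝ → ℝ) (f : ℂ → ℂ) : ℝ≥0∞ :=
  ∫⁻ z in Metric.ball (0:ℂ) 1, ENNReal.ofReal (‖f z‖ ^ p * w ‖z‖)

/-! On `[t, 1)` the decreasing factor is at most `φ t`, on `[r, t]` at least `φ t`; hence
`C ∫_t^1 ωφ ≤ C φ(t) ∫_t^1 ω ≤ φ(t) ∫_r^t ω ≤ ∫_r^t ωφ` whenever `C ∫_t^1 ω ≤ ∫_r^t ω`.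
Splitting `ω̂(r) = ∫_r^t ω + ω̂(t)` shows that `ω̂(r) ≥ C ω̂(t)` is exactly this inequality
with constant `C - 1`, so membership in `Ď` passes from `ω` to `ωφ` with the same `k` and `C`. -/

lemma intervalIntegrable_of_integrableOn_Ico {f : ℝ → ℝ} (hf : IntegrableOn f (Ico 0 1))
    {a b : ℝ} (ha : a ∈ Icc (0:ℝ) 1) (hb : b ∈ Icc (0:ℝ) 1) :
    IntervalIntegrable f volume a b :=
  (((integrableOn_Icc_iff_integrableOn_Ico (f := f) (a := 0) (b := 1) enorm_ne_top).2 hf).mono_set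
    (uIcc_subset_Icc ha hb)).intervalIntegrable

lemma wHat_eq_integral_add_wHat {f : ℝ → ℝ} {r t : ℝ}
    (hrt : IntervalIntegrable f volume r t) (ht1 : IntervalIntegrable f volume t 1) :
    wHat f r = (∫ s in r..t, f s) + wHat f t :=
  (intervalIntegral.integral_add_adjacent_intervals hrt ht1).symm

lemma mul_wHat_le_wHat_iff {f : ℝ → ℝ} {r t : ℝ} (C : ℝ)
    (hrt : IntervalIntegrable f volume r t) (ht1 : IntervalIntegrable f volume t 1) :
    C * wHat f t ≤ wHat f r ↔ (C - 1) * wHat f t ≤ ∫ s in r..t, f s := by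
  rw [wHat_eq_integral_add_wHat hrt ht1]
  constructor <;> intro h <;> linarith

lemma one_sub_div_mem_Ico {k r : ℝ} (hk : 1 < k) (hr : r < 1) :
    1 - (1 - r) / k ∈ Ico r 1 := by
  have h1r : 0 < 1 - r := by linarith
  exact ⟨by linarith [div_lt_self h1r hk], by linarith [div_pos h1r (zero_lt_one.trans hk)]⟩

section AntitoneFactor

variable {ω φ : ℝ → ℝ} (hω_nonneg : ∀ s ∈ Ico (0:ℝ) 1, 0 ≤ ω s)
  (hω_int : IntegrableOn ω (Ico 0 1)) (hφ_nonneg : ∀ s ∈ Ico (0:ℝ) 1, 0 ≤ φ s)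
  (hφ_anti : AntitoneOn φ (Ico 0 1))
include hω_nonneg hω_int hφ_nonneg hφ_anti

lemma integrableOn_mul_of_antitoneOn : IntegrableOn (fun s => ω s * φ s) (Ico 0 1) := by
  have h0 : (0:ℝ) ∈ Ico (0:ℝ) 1 := ⟨le_rfl, one_pos⟩
  refine (hω_int.mul_const (φ 0)).mono
    ((hω_int.aestronglyMeasurable.aemeasurable.mul
      (aemeasurable_restrict_of_antitoneOn measurableSet_Ico hφ_anti)).aestronglyMeasurable) ?_
  filter_upwards [ae_restrict_mem measurableSet_Ico] with x hx
  rw [Real.norm_of_nonneg (mul_nonneg (hω_nonneg x hx) (hφ_nonneg x hx)),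
    Real.norm_of_nonneg (mul_nonneg (hω_nonneg x hx) (hφ_nonneg 0 h0))]
  exact mul_le_mul_of_nonneg_left (hφ_anti h0 hx hx.1) (hω_nonneg x hx)

lemma integral_mul_le_mul_integral_of_antitoneOn {t : ℝ} (ht : t ∈ Ico (0:ℝ) 1) :
    ∫ s in t..1, ω s * φ s ≤ φ t * ∫ s in t..1, ω s := by
  have hmem : ∀ x ∈ Ioo t 1, x ∈ Ico (0:ℝ) 1 := fun x hx => ⟨ht.1.trans hx.1.le, hx.2⟩
  have ht' : t ∈ Icc (0:ℝ) 1 := Ico_subset_Icc_self ht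
  rw [← intervalIntegral.integral_const_mul]
  refine intervalIntegral.integral_mono_on_of_le_Ioo ht.2.le
    (intervalIntegrable_of_integrableOn_Ico
      (integrableOn_mul_of_antitoneOn hω_nonneg hω_int hφ_nonneg hφ_anti) ht' ⟨zero_le_one, le_rfl⟩)
    ((intervalIntegrable_of_integrableOn_Ico hω_int ht' ⟨zero_le_one, le_rfl⟩).const_mul _)
    fun x hx => ?_
  rw [mul_comm (φ t)]
  exact mul_le_mul_of_nonneg_left (hφ_anti ht (hmem x hx) hx.1.le) (hω_nonneg x (hmem x hx))

lemma mul_integral_le_integral_mul_of_antitoneOn {r t : ℝ} (hr : 0 ≤ r) (hrt : r ≤ t)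
    (ht : t < 1) :
    φ t * ∫ s in r..t, ω s ≤ ∫ s in r..t, ω s * φ s := by
  have hmem : ∀ x ∈ Ioo r t, x ∈ Ico (0:ℝ) 1 := fun x hx => ⟨hr.trans hx.1.le, hx.2.trans ht⟩
  have hr' : r ∈ Icc (0:ℝ) 1 := ⟨hr, hrt.trans ht.le⟩
  have ht' : t ∈ Icc (0:ℝ) 1 := ⟨hr.trans hrt, ht.le⟩
  rw [← intervalIntegral.integral_const_mul]
  refine intervalIntegral.integral_mono_on_of_le_Ioo hrt
    ((intervalIntegrable_of_integrableOn_Ico hω_int hr' ht').const_mul _)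
    (intervalIntegrable_of_integrableOn_Ico
      (integrableOn_mul_of_antitoneOn hω_nonneg hω_int hφ_nonneg hφ_anti) hr' ht')
    fun x hx => ?_
  rw [mul_comm (φ t)]
  exact mul_le_mul_of_nonneg_left (hφ_anti (hmem x hx) ⟨hr.trans hrt, ht⟩ hx.2.le)
    (hω_nonneg x (hmem x hx))

lemma mul_integral_le_integral_mul_of_antitoneOn_of_le {C r t : ℝ} (hC : 0 ≤ C) (hr : 0 ≤ r)
    (hrt : r ≤ t) (ht : t < 1) (hω : C * ∫ s in t..1, ω s ≤ ∫ s in r..t, ω s) :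
    C * ∫ s in t..1, ω s * φ s ≤ ∫ s in r..t, ω s * φ s :=
  calc C * ∫ s in t..1, ω s * φ s ≤ C * (φ t * ∫ s in t..1, ω s) :=
        mul_le_mul_of_nonneg_left (integral_mul_le_mul_integral_of_antitoneOn
          hω_nonneg hω_int hφ_nonneg hφ_anti ⟨hr.trans hrt, ht⟩) hC
    _ = φ t * (C * ∫ s in t..1, ω s) := by ring
    _ ≤ φ t * ∫ s in r..t, ω s :=
        mul_le_mul_of_nonneg_left hω (hφ_nonneg t ⟨hr.trans hrt, ht⟩)
    _ ≤ ∫ s in r..t, ω s * φ s :=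
        mul_integral_le_integral_mul_of_antitoneOn hω_nonneg hω_int hφ_nonneg hφ_anti hr hrt ht

lemma mul_wHat_le_wHat_mul_of_antitoneOn {C r t : ℝ} (hC : 1 ≤ C) (hr : 0 ≤ r) (hrt : r ≤ t)
    (ht : t < 1) (hω : C * wHat ω t ≤ wHat ω r) :
    C * wHat (fun s => ω s * φ s) t ≤ wHat (fun s => ω s * φ s) r := by
  have hr' : r ∈ Icc (0:ℝ) 1 := ⟨hr, hrt.trans ht.le⟩
  have ht' : t ∈ Icc (0:ℝ) 1 := ⟨hr.trans hrt, ht.le⟩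
  have h1 : (1:ℝ) ∈ Icc (0:ℝ) 1 := ⟨zero_le_one, le_rfl⟩
  have hωφ_int := integrableOn_mul_of_antitoneOn hω_nonneg hω_int hφ_nonneg hφ_anti
  rw [mul_wHat_le_wHat_iff C (intervalIntegrable_of_integrableOn_Ico hω_int hr' ht')
    (intervalIntegrable_of_integrableOn_Ico hω_int ht' h1)] at hω
  rw [mul_wHat_le_wHat_iff C (intervalIntegrable_of_integrableOn_Ico hωφ_int hr' ht')
    (intervalIntegrable_of_integrableOn_Ico hωφ_int ht' h1)]
  exact mul_integral_le_integral_mul_of_antitoneOn_of_le hω_nonneg hω_int hφ_nonneg hφ_anti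
    (by linarith) hr hrt ht hω

end AntitoneFactor

/-- **Lemma (i) on products with decreasing functions.** If `ω ∈ Ď` and
`φ : [0,1) → (0,∞)` is decreasing, then `ωφ ∈ Ď`.  Moreover, if there are `k > 1` and
`C > 0` with `C ∫_{1-(1-r)/k}^1 ω ≤ ∫_r^{1-(1-r)/k} ω` for all `0 ≤ r < 1`, then also
`C ∫_{1-(1-r)/k}^1 ωφ ≤ ∫_r^{1-(1-r)/k} ωφ` for all `0 ≤ r < 1`. -/
theorem Dcheck_mul_decreasing (ω : ℝ → ℝ) (hω : IsRadialWeight ω) (hωD : Dcheck ω)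
    (φ : ℝ → ℝ) (hφpos : ∀ r ∈ Set.Ico (0:ℝ) 1, 0 < φ r)
    (hφdec : AntitoneOn φ (Set.Ico (0:ℝ) 1)) :
    Dcheck (fun r => ω r * φ r) ∧
      ∀ k > (1:ℝ), ∀ C > (0:ℝ),
        (∀ r ∈ Set.Ico (0:ℝ) 1,
            C * ∫ s in (1 - (1 - r) / k)..1, ω s ≤ ∫ s in r..(1 - (1 - r) / k), ω s) →
        ∀ r ∈ Set.Ico (0:ℝ) 1,
          C * ∫ s in (1 - (1 - r) / k)..1, ω s * φ s ≤
            ∫ s in r..(1 - (1 - r) / k), ω s * φ s := by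
  obtain ⟨hω_nonneg, hω_int, -⟩ := hω
  have hφ_nonneg : ∀ s ∈ Ico (0:ℝ) 1, 0 ≤ φ s := fun s hs => (hφpos s hs).le
  refine ⟨?_, fun k hk C hC h r hr => ?_⟩
  · obtain ⟨k, hk, C, hC, hD⟩ := hωD
    refine ⟨k, hk, C, hC, fun r hr => ?_⟩
    obtain ⟨hrt, ht⟩ := one_sub_div_mem_Ico hk hr.2
    exact mul_wHat_le_wHat_mul_of_antitoneOn hω_nonneg hω_int hφ_nonneg hφdec hC.le hr.1 hrt ht
      (hD r hr)
  · obtain ⟨hrt, ht⟩ := one_sub_div_mem_Ico hk hr.2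
    exact mul_integral_le_integral_mul_of_antitoneOn_of_le hω_nonneg hω_int hφ_nonneg hφdec hC.le
      hr.1 hrt ht (h r hr)
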